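/- Let k be an algebraically closed field of characteristic p > 2, let g = sl_2(k), m ≥ 0, and let x = Σ_{j=i}^m x_j t^j ∈ g ⊗ k[t]/(t^{m+1}) with all x_j ∈ sl_2(k) nilpotent matrices and x_i ≠ 0. Then the centraliser of x in the truncated current Lie algebra (sl_2)_m has dimension at least 2i + m + 1. -/

import Mathlib

/-!
Write `x = t^i • y` with `y = Σ_j t^(j-i) x_j`, so that `t^m • y = t^m • x_i ≠ 0`. The elements
`t^c • y` (`c ≤ m - i`) commute with `x`, and so do the `3i` elements `t^(m-a) • e, f, h` (`a < i`),
whose products with `x` vanish as `t^(m+1) = 0`; all are traceless since the `x_j` are nilpotent.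
The latter are killed by `t^i`, whereas `t^i • Σ_c β_c t^c • y = 0` forces `β = 0`, so all
`3i + (m - i + 1)` elements are linearly independent.
-/

open Polynomial

namespace TruncatedCurrent

section PowSmul

variable {k A V : Type*} [Field k] [CommRing A] [Algebra k A] [AddCommGroup V] [Module A V]
  [Module k V] [IsScalarTower k A V] {t : A} {v : V}

theorem eq_zero_of_pow_smul_sum_pow_smul_eq_zero {n s : ℕ} (hv : t ^ (n + s) • v ≠ 0)
    (hv' : t ^ (n + s + 1) • v = 0) (β : Fin (n + 1) → k)
    (h : t ^ s • ∑ c, β c • t ^ (c : ℕ) • v = 0) : β = 0 := by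
  have hpow : ∀ a b, t ^ a • t ^ b • v = t ^ (a + b) • v := fun a b => by
    rw [smul_smul, pow_add]
  ext ⟨c, hc⟩
  -- once the `β c'` with `c' < c` vanish, multiplying by `t ^ (n - c)` leaves only `β c`
  induction c using Nat.strong_induction_on with
  | _ c ih =>
  have hkey : t ^ (n - c) • t ^ s • ∑ c', β c' • t ^ (c' : ℕ) • v =
      β ⟨c, hc⟩ • t ^ (n + s) • v := by
    simp only [Finset.smul_sum, smul_comm _ (β _), hpow]
    rw [Finset.sum_eq_single ⟨c, hc⟩ (fun c' _ hne => ?_) (by simp)]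
    · congr 3; dsimp only; omega
    rcases Nat.lt_or_gt_of_ne (Fin.val_ne_of_ne hne) with hlt | hgt
    · rw [show β c' = 0 from ih c' hlt c'.2, zero_smul]
    · dsimp only at hgt
      rw [← Nat.sub_add_cancel (show n + s + 1 ≤ n - c + (s + c') by omega), pow_add,
        mul_smul, hv', smul_zero, smul_zero]
  rw [h, smul_zero, eq_comm, smul_eq_zero] at hkey
  exact hkey.resolve_right hv

theorem linearIndependent_pow_smul {n : ℕ} (hv : t ^ n • v ≠ 0) (hv' : t ^ (n + 1) • v = 0) :
    LinearIndependent k fun c : Fin (n + 1) => t ^ (c : ℕ) • v :=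
  Fintype.linearIndependent_iff.2 fun β hβ =>
    congrFun (eq_zero_of_pow_smul_sum_pow_smul_eq_zero (s := 0) hv hv' β (by simpa using hβ))

theorem linearIndependent_sumElim_pow_smul {ι : Type*} [Fintype ι] {w : ι → V} {n s : ℕ}
    (hw : LinearIndependent k w) (hws : ∀ j, t ^ s • w j = 0)
    (hv : t ^ (n + s) • v ≠ 0) (hv' : t ^ (n + s + 1) • v = 0) :
    LinearIndependent k (Sum.elim w fun c : Fin (n + 1) => t ^ (c : ℕ) • v) := by
  refine Fintype.linearIndependent_iff.2 fun g hg => ?_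
  simp only [Fintype.sum_sum_type, Sum.elim_inl, Sum.elim_inr] at hg
  have hβ : (fun c => g (.inr c)) = 0 := by
    refine eq_zero_of_pow_smul_sum_pow_smul_eq_zero hv hv' _ ?_
    have := congrArg (t ^ s • ·) hg
    simpa only [smul_add, Finset.smul_sum, smul_comm (t ^ s) (g _), hws, smul_zero,
      Finset.sum_const_zero, zero_add] using this
  have hα : (fun j => g (.inl j)) = 0 := by
    refine funext (Fintype.linearIndependent_iff.1 hw _ ?_)
    simpa [congrFun hβ] using hg
  rintro (j | c)
  exacts [congrFun hα j, congrFun hβ c]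

end PowSmul

section Sl2

variable (R : Type*) [CommRing R]

def sl2Triple : Fin 3 → Matrix (Fin 2) (Fin 2) R :=
  ![Matrix.single 0 1 1, Matrix.single 1 0 1, Matrix.single 0 0 1 - Matrix.single 1 1 1]

theorem trace_sl2Triple (l : Fin 3) : (sl2Triple R l).trace = 0 := by
  fin_cases l <;> simp [sl2Triple]

theorem linearIndependent_sl2Triple : LinearIndependent R (sl2Triple R) := by
  refine Fintype.linearIndependent_iff.2 fun g hg l => ?_
  fin_cases l
  · simpa [Fin.sum_univ_three, sl2Triple] using congrFun (congrFun hg 0) 1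
  · simpa [Fin.sum_univ_three, sl2Triple] using congrFun (congrFun hg 1) 0
  · simpa [Fin.sum_univ_three, sl2Triple] using congrFun (congrFun hg 0) 0

end Sl2

theorem smul_map_algebraMap_ne_zero {k A m n : Type*} [Field k] [Ring A] [Algebra k A]
    {a : A} (ha : a ≠ 0) {M : Matrix m n k} (hM : M ≠ 0) :
    a • M.map (algebraMap k A) ≠ 0 := by
  obtain ⟨r, s, hrs⟩ : ∃ r s, M r s ≠ 0 := by
    by_contra! h
    exact hM (Matrix.ext h)
  intro h
  have := congrFun (congrFun h r) s
  rw [Matrix.smul_apply, Matrix.map_apply, smul_eq_mul, ← Algebra.commutes, ← Algebra.smul_def,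
    Matrix.zero_apply, smul_eq_zero] at this
  exact this.elim hrs ha

abbrev Truncated (k : Type*) [Field k] (m : ℕ) := AdjoinRoot ((X : k[X]) ^ (m + 1))

namespace Truncated

variable (k : Type*) [Field k] (m : ℕ)

instance : Module.Finite k (Truncated k m) :=
  (monic_X_pow (m + 1)).finite_adjoinRoot

noncomputable abbrev t : Truncated k m := AdjoinRoot.root _

variable {k m}

theorem t_pow_succ : t k m ^ (m + 1) = 0 := by
  rw [t, ← AdjoinRoot.mk_X, ← map_pow, AdjoinRoot.mk_self]

theorem t_pow_ne_zero : t k m ^ m ≠ 0 := by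
  rw [t, ← AdjoinRoot.mk_X, ← map_pow, Ne, AdjoinRoot.mk_eq_zero,
    pow_dvd_pow_iff X_ne_zero not_isUnit_X]
  omega

theorem linearIndependent_t_pow_sub {i : ℕ} (hi : i ≤ m + 1) :
    LinearIndependent k fun a : Fin i => t k m ^ (m - a) := by
  have h := (linearIndependent_pow_smul (k := k) (t := t k m) (v := (1 : Truncated k m))
    (by simpa using t_pow_ne_zero) (by simpa using t_pow_succ)).comp _
    (Fin.rev_injective.comp (Fin.castLE_injective hi))
  simpa [Function.comp_def, Nat.add_sub_add_right] using h

end Truncated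

open Truncated

variable {k : Type*} [Field k] {m : ℕ} (i : ℕ) (x : Fin (m + 1) → Matrix (Fin 2) (Fin 2) k)

/-- `Σ_j x_j t^(j-i)`; the truncated subtraction is harmless once `x_j = 0` for `j < i`. -/
noncomputable def shiftDown : Matrix (Fin 2) (Fin 2) (Truncated k m) :=
  ∑ j : Fin (m + 1), t k m ^ ((j : ℕ) - i) • (x j).map (algebraMap k _)

variable {i x}

theorem sum_eq_t_pow_smul_shiftDown (hlow : ∀ j : Fin (m + 1), (j : ℕ) < i → x j = 0) :
    ∑ j : Fin (m + 1), t k m ^ (j : ℕ) • (x j).map (algebraMap k _) =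
      t k m ^ i • shiftDown i x := by
  rw [shiftDown, Finset.smul_sum]
  refine Finset.sum_congr rfl fun j _ => ?_
  rcases lt_or_ge (j : ℕ) i with hj | hj
  · simp [hlow j hj]
  · rw [smul_smul, ← pow_add, Nat.add_sub_cancel' hj]

theorem t_pow_smul_shiftDown (hi : i ≤ m) (hlow : ∀ j : Fin (m + 1), (j : ℕ) < i → x j = 0) :
    t k m ^ m • shiftDown i x =
      t k m ^ m • (x ⟨i, Nat.lt_succ_of_le hi⟩).map (algebraMap k _) := by
  rw [shiftDown, Finset.smul_sum,
    Finset.sum_eq_single ⟨i, Nat.lt_succ_of_le hi⟩ (fun j _ hj => ?_) (by simp)]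
  · simp
  rcases lt_or_ge (j : ℕ) i with hlt | hge
  · simp [hlow j hlt]
  · have : i < (j : ℕ) := lt_of_le_of_ne hge fun h => hj (Fin.ext h.symm)
    rw [smul_smul, ← pow_add, pow_eq_zero_of_le (by omega) t_pow_succ, zero_smul]

theorem trace_shiftDown (htr : ∀ j, (x j).trace = 0) : (shiftDown i x).trace = 0 := by
  simp [shiftDown, Matrix.trace_smul, ← AddMonoidHom.map_trace, htr]

theorem card_le_finrank_ker_commutator_inf_ker_trace {k A n ι : Type*} [Field k] [CommRing A]
    [Algebra k A] [Module.Finite k A] [Fintype n] [DecidableEq n] [Fintype ι] {X : Matrix n n A}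
    {v : ι → Matrix n n A} (hv : LinearIndependent k v) (hcomm : ∀ a, Commute X (v a))
    (htr : ∀ a, (v a).trace = 0) :
    Fintype.card ι ≤ Module.finrank k
      ↥(LinearMap.ker (LinearMap.mulLeft k X - LinearMap.mulRight k X) ⊓
        LinearMap.ker (Matrix.traceLinearMap n k A)) := by
  have hmem a : v a ∈ LinearMap.ker (LinearMap.mulLeft k X - LinearMap.mulRight k X) ⊓
      LinearMap.ker (Matrix.traceLinearMap n k A) := by
    simpa [sub_eq_zero] using ⟨(hcomm a).eq, htr a⟩
  exact (LinearIndependent.of_comp (Submodule.subtype _) (v := fun a => ⟨v a, hmem a⟩) hv)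
    |>.fintype_card_le_finrank

end TruncatedCurrent

open TruncatedCurrent Truncated

theorem sl2_truncated_centralizer_dim_bound
    (k : Type*) [Field k]
    (m i : ℕ) (hi : i ≤ m)
    (x : Fin (m + 1) → Matrix (Fin 2) (Fin 2) k)
    (hnil : ∀ j, IsNilpotent (x j))
    (hlow : ∀ j : Fin (m + 1), (j : ℕ) < i → x j = 0)
    (hxi : x ⟨i, Nat.lt_succ_of_le hi⟩ ≠ 0) :
    letI A := AdjoinRoot ((X : Polynomial k) ^ (m + 1))
    letI t : A := AdjoinRoot.root _
    letI X : Matrix (Fin 2) (Fin 2) A :=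
      ∑ j : Fin (m + 1), (t ^ (j : ℕ)) • (x j).map (algebraMap k A)
    2 * i + m + 1 ≤ Module.finrank k
      ((LinearMap.ker (LinearMap.mulLeft k X - LinearMap.mulRight k X)) ⊓
        (LinearMap.ker (Matrix.traceLinearMap (Fin 2) k A)) :
          Submodule k (Matrix (Fin 2) (Fin 2) A)) := by
  have hX : ∑ j : Fin (m + 1), t k m ^ (j : ℕ) • (x j).map (algebraMap k _) =
      t k m ^ i • shiftDown i x :=
    sum_eq_t_pow_smul_shiftDown hlow
  have htr j : (x j).trace = 0 := (Matrix.isNilpotent_trace_of_isNilpotent (hnil j)).eq_zero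
  have hkill (a : Fin i) : t k m ^ i * t k m ^ (m - (a : ℕ)) = 0 := by
    rw [← pow_add, pow_eq_zero_of_le (by omega) t_pow_succ]
  have hideal := linearIndependent_smul (linearIndependent_t_pow_sub (k := k) (m := m) (i := i)
    (by omega)) (linearIndependent_sl2Triple (Truncated k m))
  have hy : t k m ^ (m - i + i) • shiftDown i x ≠ 0 := by
    rw [Nat.sub_add_cancel hi, t_pow_smul_shiftDown hi hlow]
    exact smul_map_algebraMap_ne_zero t_pow_ne_zero hxi
  have hy' : t k m ^ (m - i + i + 1) • shiftDown i x = 0 := by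
    rw [Nat.sub_add_cancel hi, t_pow_succ, zero_smul]
  have hv := linearIndependent_sumElim_pow_smul hideal
    (fun p => by rw [smul_smul, hkill, zero_smul]) hy hy'
  calc 2 * i + m + 1 = Fintype.card ((Fin i × Fin 3) ⊕ Fin (m - i + 1)) := by
        simp only [Fintype.card_sum, Fintype.card_prod, Fintype.card_fin]; omega
    _ ≤ _ := card_le_finrank_ker_commutator_inf_ker_trace hv ?_ ?_
  · rintro (p | c) <;> rw [hX]
    · rw [Sum.elim_inl, Commute, SemiconjBy, smul_mul_smul_comm, smul_mul_smul_comm, hkill,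
        mul_comm, hkill, zero_smul, zero_smul]
    · exact ((Commute.refl _).smul_left _).smul_right _
  · rintro (p | c) <;> simp [Matrix.trace_smul, trace_sl2Triple, trace_shiftDown htr]
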